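/- arXiv:2207.03839 — 4 statements merged into one kernel-verified Lean document; each statement's English description precedes it below -/
import Mathlib

section
/- Let A and B be tridendriform algebras over a field K. Define bilinear operations on the tensor product A⊗B by (a⊗b)≺(c⊗d) = (a*c)⊗(b≺d), (a⊗b)·(c⊗d) = (a*c)⊗(b·d), (a⊗b)≻(c⊗d) = (a*c)⊗(b≻d), where * is the total product on A. Then (A⊗B, ≺, ·, ≻) is a tridendriform algebra, and its total product is (a⊗b)*(c⊗d) = (a*c)⊗(b*d). -/
open TensorProduct

/-- The data of three bilinear operations on a `K`-vector space `A`: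
left product `≺` (`lt`), middle product `·` (`mid`) and right product `≻` (`rt`). -/
structure TriOps (K : Type*) [Field K] (A : Type*) [AddCommGroup A] [Module K A] where
  lt : A →ₗ[K] A →ₗ[K] A
  mid : A →ₗ[K] A →ₗ[K] A
  rt : A →ₗ[K] A →ₗ[K] A

namespace TriOps

variable {K : Type*} [Field K] {A : Type*} [AddCommGroup A] [Module K A]

/-- The total product `a * b = a ≺ b + a · b + a ≻ b`. -/
def star (T : TriOps K A) (a b : A) : A :=
  T.lt a b + T.mid a b + T.rt a b

/-- The seven tridendriform relations: `(A, ≺, ·, ≻)` is a tridendriform algebra. -/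
structure IsTridend (T : TriOps K A) : Prop where
  rel1 : ∀ a b c : A, T.lt (T.lt a b) c = T.lt a (T.star b c)
  rel2 : ∀ a b c : A, T.lt (T.rt a b) c = T.rt a (T.lt b c)
  rel3 : ∀ a b c : A, T.rt (T.star a b) c = T.rt a (T.rt b c)
  rel4 : ∀ a b c : A, T.mid (T.rt a b) c = T.rt a (T.mid b c)
  rel5 : ∀ a b c : A, T.mid (T.lt a b) c = T.mid a (T.rt b c)
  rel6 : ∀ a b c : A, T.lt (T.mid a b) c = T.mid a (T.lt b c)
  rel7 : ∀ a b c : A, T.mid (T.mid a b) c = T.mid a (T.mid b c)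

end TriOps

section Aux

variable {K : Type*} [Field K] {A : Type*} [AddCommGroup A] [Module K A]
  {B : Type*} [AddCommGroup B] [Module K B]

open TensorProduct in
/-- Key induction lemma: a relation of the common tridendriform shape lifts to tensors. -/
theorem map₂_rel (sA : A →ₗ[K] A →ₗ[K] A)
    (hsA : ∀ a c e : A, sA (sA a c) e = sA a (sA c e))
    (g1 g2 g3 g4 : B →ₗ[K] B →ₗ[K] B)
    (hg : ∀ b d f : B, g1 (g2 b d) f = g3 b (g4 d f))
    (x y z : A ⊗[K] B) :
    map₂ sA g1 (map₂ sA g2 x y) z = map₂ sA g3 x (map₂ sA g4 y z) := by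
  induction x using TensorProduct.induction_on with
  | zero => simp
  | add x₁ x₂ h₁ h₂ =>
    simp only [map_add, LinearMap.add_apply] at h₁ h₂ ⊢; rw [h₁, h₂]
  | tmul a b =>
    induction y using TensorProduct.induction_on with
    | zero => simp
    | add y₁ y₂ h₁ h₂ =>
      simp only [map_add, LinearMap.add_apply, TensorProduct.map₂_apply_tmul]
        at h₁ h₂ ⊢
      rw [h₁, h₂]
    | tmul c d =>
      induction z using TensorProduct.induction_on with
      | zero => simp
      | add z₁ z₂ h₁ h₂ =>
        simp only [map_add, LinearMap.add_apply, TensorProduct.map₂_apply_tmul]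
          at h₁ h₂ ⊢
        rw [h₁, h₂]
      | tmul e f =>
        simp only [TensorProduct.map₂_apply_tmul, TensorProduct.map_tmul, hsA, hg]

end Aux

/-- The tensor product of two tridendriform algebras, equipped with the
operations `(a ⊗ b) ⋉ (c ⊗ d) = (a * c) ⊗ (b ⋉ d)` for `⋉ ∈ {≺, ·, ≻}`, is a
tridendriform algebra, and its total product is `(a ⊗ b) * (c ⊗ d) = (a * c) ⊗ (b * d)`. -/
theorem tensor_tridendriform
    {K : Type*} [Field K] {A : Type*} [AddCommGroup A] [Module K A]
    {B : Type*} [AddCommGroup B] [Module K B]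
    (TA : TriOps K A) (TB : TriOps K B) (hA : TA.IsTridend) (hB : TB.IsTridend) :
    ∃ T : TriOps K (A ⊗[K] B),
      T.IsTridend ∧
      (∀ (a c : A) (b d : B),
        T.lt (a ⊗ₜ[K] b) (c ⊗ₜ[K] d) = TA.star a c ⊗ₜ[K] TB.lt b d) ∧
      (∀ (a c : A) (b d : B),
        T.mid (a ⊗ₜ[K] b) (c ⊗ₜ[K] d) = TA.star a c ⊗ₜ[K] TB.mid b d) ∧
      (∀ (a c : A) (b d : B),
        T.rt (a ⊗ₜ[K] b) (c ⊗ₜ[K] d) = TA.star a c ⊗ₜ[K] TB.rt b d) ∧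
      (∀ (a c : A) (b d : B),
        T.star (a ⊗ₜ[K] b) (c ⊗ₜ[K] d) = TA.star a c ⊗ₜ[K] TB.star b d) := by
  classical
  set sA : A →ₗ[K] A →ₗ[K] A := TA.lt + TA.mid + TA.rt with hsAdef
  set sB : B →ₗ[K] B →ₗ[K] B := TB.lt + TB.mid + TB.rt with hsBdef
  have hsA : ∀ a c : A, sA a c = TA.star a c := by
    intro a c; simp [hsAdef, TriOps.star]
  have hsB : ∀ b d : B, sB b d = TB.star b d := by
    intro b d; simp [hsBdef, TriOps.star]
  have hassoc : ∀ a c e : A, sA (sA a c) e = sA a (sA c e) := by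
    intro a c e
    simp only [hsAdef, LinearMap.add_apply, map_add, TriOps.star]
    have r1 := hA.rel1 a c e; have r2 := hA.rel2 a c e; have r3 := hA.rel3 a c e
    have r4 := hA.rel4 a c e; have r5 := hA.rel5 a c e; have r6 := hA.rel6 a c e
    have r7 := hA.rel7 a c e
    simp only [TriOps.star, map_add, LinearMap.add_apply] at r1 r2 r3 r4 r5 r6 r7
    rw [r1, r2, ← r3, r4, r5, r6, r7]; abel
  refine ⟨⟨map₂ sA TB.lt, map₂ sA TB.mid, map₂ sA TB.rt⟩, ?_, ?_, ?_, ?_, ?_⟩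
  · -- star of T equals map₂ sA sB
    have hstar : ∀ x y : A ⊗[K] B,
        TriOps.star ⟨map₂ sA TB.lt, map₂ sA TB.mid, map₂ sA TB.rt⟩ x y
          = map₂ sA sB x y := by
      intro x y
      simp only [TriOps.star, hsBdef]
      induction x using TensorProduct.induction_on with
      | zero => simp
      | add x₁ x₂ h₁ h₂ =>
        simp only [map_add, LinearMap.add_apply] at h₁ h₂ ⊢
        rw [← h₁, ← h₂]; abel
      | tmul a b =>
        induction y using TensorProduct.induction_on with
        | zero => simp
        | add y₁ y₂ h₁ h₂ =>
          simp only [map_add, LinearMap.add_apply, TensorProduct.map₂_apply_tmul]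
            at h₁ h₂ ⊢
          rw [← h₁, ← h₂]; abel
        | tmul c d =>
          simp [TensorProduct.map₂_apply_tmul, TensorProduct.tmul_add]
    constructor
    all_goals intro x y z
    · rw [hstar]
      exact map₂_rel sA hassoc _ _ _ _
        (fun b d f => by simpa [hsBdef, TriOps.star, hsB] using hB.rel1 b d f) x y z
    · exact map₂_rel sA hassoc _ _ _ _ (fun b d f => hB.rel2 b d f) x y z
    · rw [hstar]
      exact map₂_rel sA hassoc _ _ _ _
        (fun b d f => by simpa [hsBdef, TriOps.star, hsB] using hB.rel3 b d f) x y z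
    · exact map₂_rel sA hassoc _ _ _ _ (fun b d f => hB.rel4 b d f) x y z
    · exact map₂_rel sA hassoc _ _ _ _ (fun b d f => hB.rel5 b d f) x y z
    · exact map₂_rel sA hassoc _ _ _ _ (fun b d f => hB.rel6 b d f) x y z
    · exact map₂_rel sA hassoc _ _ _ _ (fun b d f => hB.rel7 b d f) x y z
  · intro a c b d; simp [TensorProduct.map₂_apply_tmul, hsA]
  · intro a c b d; simp [TensorProduct.map₂_apply_tmul, hsA]
  · intro a c b d; simp [TensorProduct.map₂_apply_tmul, hsA]
  · intro a c b d
    simp [TriOps.star, TensorProduct.map₂_apply_tmul, hsA, TensorProduct.tmul_add]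
end

section
/- Let A, B, C be tridendriform algebras over a field K. Then the canonical linear isomorphism (A⊗̄B)⊗̄C ≅ A⊗̄(B⊗̄C), induced by the associator of the tensor product and the identifications K⊗V ≅ V ≅ V⊗K (matching the seven components A⊗B⊗C, A⊗B, A⊗C, B⊗C, A, B, C on both sides), is an isomorphism of tridendriform algebras: it intertwines each of the operations ≺, ·, ≻ of the two iterated augmented tensor products. -/
open TensorProduct

/-- `T` is the augmented tensor-product tridendriform structure on
`A ⊗̄ B = (A ⊗ B) ⊕ (K1 ⊗ B) ⊕ (A ⊗ K1)`, modelled by the vector space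
`(A ⊗ B) × B × A` where `(x, b, a)` represents `x + 1 ⊗ b + a ⊗ 1`.
The operations on pure tensors are `(a ⊗ b) ⋉ (c ⊗ d) = (a ⋉ c) ⊗ 1` when `b = d = 1`,
and `(a ⊗ b) ⋉ (c ⊗ d) = (a * c) ⊗ (b ⋉ d)` otherwise, using the unit conventions
`x ≺ 1 = x`, `1 ≻ x = x`, `x ≻ 1 = 1 ≺ x = x · 1 = 1 · x = 0`, `1 * x = x = x * 1`. -/
structure IsAugTensorTriOps
    {K : Type*} [Field K] {A : Type*} [AddCommGroup A] [Module K A]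
    {B : Type*} [AddCommGroup B] [Module K B]
    (TA : TriOps K A) (TB : TriOps K B)
    (T : TriOps K ((A ⊗[K] B) × B × A)) : Prop where
  -- the left product ≺
  lt1 : ∀ (a c : A) (b d : B),
    T.lt (a ⊗ₜ[K] b, 0, 0) (c ⊗ₜ[K] d, 0, 0) = (TA.star a c ⊗ₜ[K] TB.lt b d, 0, 0)
  lt2 : ∀ (a : A) (b d : B),
    T.lt (a ⊗ₜ[K] b, 0, 0) (0, d, 0) = (a ⊗ₜ[K] TB.lt b d, 0, 0)
  lt3 : ∀ (a c : A) (b : B),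
    T.lt (a ⊗ₜ[K] b, 0, 0) (0, 0, c) = (TA.star a c ⊗ₜ[K] b, 0, 0)
  lt4 : ∀ (c : A) (b d : B),
    T.lt (0, b, 0) (c ⊗ₜ[K] d, 0, 0) = (c ⊗ₜ[K] TB.lt b d, 0, 0)
  lt5 : ∀ b d : B, T.lt (0, b, 0) (0, d, 0) = (0, TB.lt b d, 0)
  lt6 : ∀ (c : A) (b : B), T.lt (0, b, 0) (0, 0, c) = (c ⊗ₜ[K] b, 0, 0)
  lt7 : ∀ (a c : A) (d : B), T.lt (0, 0, a) (c ⊗ₜ[K] d, 0, 0) = 0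
  lt8 : ∀ (a : A) (d : B), T.lt (0, 0, a) (0, d, 0) = 0
  lt9 : ∀ a c : A, T.lt (0, 0, a) (0, 0, c) = (0, 0, TA.lt a c)
  -- the middle product ·
  mid1 : ∀ (a c : A) (b d : B),
    T.mid (a ⊗ₜ[K] b, 0, 0) (c ⊗ₜ[K] d, 0, 0) = (TA.star a c ⊗ₜ[K] TB.mid b d, 0, 0)
  mid2 : ∀ (a : A) (b d : B),
    T.mid (a ⊗ₜ[K] b, 0, 0) (0, d, 0) = (a ⊗ₜ[K] TB.mid b d, 0, 0)
  mid3 : ∀ (a c : A) (b : B), T.mid (a ⊗ₜ[K] b, 0, 0) (0, 0, c) = 0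
  mid4 : ∀ (c : A) (b d : B),
    T.mid (0, b, 0) (c ⊗ₜ[K] d, 0, 0) = (c ⊗ₜ[K] TB.mid b d, 0, 0)
  mid5 : ∀ b d : B, T.mid (0, b, 0) (0, d, 0) = (0, TB.mid b d, 0)
  mid6 : ∀ (c : A) (b : B), T.mid (0, b, 0) (0, 0, c) = 0
  mid7 : ∀ (a c : A) (d : B), T.mid (0, 0, a) (c ⊗ₜ[K] d, 0, 0) = 0
  mid8 : ∀ (a : A) (d : B), T.mid (0, 0, a) (0, d, 0) = 0
  mid9 : ∀ a c : A, T.mid (0, 0, a) (0, 0, c) = (0, 0, TA.mid a c)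
  -- the right product ≻
  rt1 : ∀ (a c : A) (b d : B),
    T.rt (a ⊗ₜ[K] b, 0, 0) (c ⊗ₜ[K] d, 0, 0) = (TA.star a c ⊗ₜ[K] TB.rt b d, 0, 0)
  rt2 : ∀ (a : A) (b d : B),
    T.rt (a ⊗ₜ[K] b, 0, 0) (0, d, 0) = (a ⊗ₜ[K] TB.rt b d, 0, 0)
  rt3 : ∀ (a c : A) (b : B), T.rt (a ⊗ₜ[K] b, 0, 0) (0, 0, c) = 0
  rt4 : ∀ (c : A) (b d : B),
    T.rt (0, b, 0) (c ⊗ₜ[K] d, 0, 0) = (c ⊗ₜ[K] TB.rt b d, 0, 0)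
  rt5 : ∀ b d : B, T.rt (0, b, 0) (0, d, 0) = (0, TB.rt b d, 0)
  rt6 : ∀ (c : A) (b : B), T.rt (0, b, 0) (0, 0, c) = 0
  rt7 : ∀ (a c : A) (d : B),
    T.rt (0, 0, a) (c ⊗ₜ[K] d, 0, 0) = (TA.star a c ⊗ₜ[K] d, 0, 0)
  rt8 : ∀ (a : A) (d : B), T.rt (0, 0, a) (0, d, 0) = (a ⊗ₜ[K] d, 0, 0)
  rt9 : ∀ a c : A, T.rt (0, 0, a) (0, 0, c) = (0, 0, TA.rt a c)

section StarLemmas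

variable {K : Type*} [Field K] {A : Type*} [AddCommGroup A] [Module K A]
    {B : Type*} [AddCommGroup B] [Module K B]
    {TA : TriOps K A} {TB : TriOps K B} {T : TriOps K ((A ⊗[K] B) × B × A)}
    (h : IsAugTensorTriOps TA TB T)
include h

lemma star_tt (a c : A) (b d : B) :
    T.star (a ⊗ₜ[K] b, 0, 0) (c ⊗ₜ[K] d, 0, 0) = (TA.star a c ⊗ₜ[K] TB.star b d, 0, 0) := by
  simp only [TriOps.star, h.lt1, h.mid1, h.rt1, Prod.mk_add_mk, tmul_add, add_zero, zero_add]

lemma star_tb (a : A) (b d : B) :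
    T.star (a ⊗ₜ[K] b, 0, 0) (0, d, 0) = (a ⊗ₜ[K] TB.star b d, 0, 0) := by
  simp only [TriOps.star, h.lt2, h.mid2, h.rt2, Prod.mk_add_mk, tmul_add, add_zero, zero_add]

lemma star_ta (a c : A) (b : B) :
    T.star (a ⊗ₜ[K] b, 0, 0) (0, 0, c) = (TA.star a c ⊗ₜ[K] b, 0, 0) := by
  simp only [TriOps.star, h.lt3, h.mid3, h.rt3, Prod.mk_add_mk, tmul_add, add_zero, zero_add]

lemma star_bt (c : A) (b d : B) :
    T.star (0, b, 0) (c ⊗ₜ[K] d, 0, 0) = (c ⊗ₜ[K] TB.star b d, 0, 0) := by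
  simp only [TriOps.star, h.lt4, h.mid4, h.rt4, Prod.mk_add_mk, tmul_add, add_zero, zero_add]

lemma star_bb (b d : B) : T.star (0, b, 0) (0, d, 0) = (0, TB.star b d, 0) := by
  simp only [TriOps.star, h.lt5, h.mid5, h.rt5, Prod.mk_add_mk, tmul_add, add_zero, zero_add]

lemma star_ba (c : A) (b : B) : T.star (0, b, 0) (0, 0, c) = (c ⊗ₜ[K] b, 0, 0) := by
  simp only [TriOps.star, h.lt6, h.mid6, h.rt6, Prod.mk_add_mk, tmul_add, add_zero, zero_add]

lemma star_at (a c : A) (d : B) :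
    T.star (0, 0, a) (c ⊗ₜ[K] d, 0, 0) = (TA.star a c ⊗ₜ[K] d, 0, 0) := by
  simp only [TriOps.star, h.lt7, h.mid7, h.rt7, Prod.mk_add_mk, tmul_add, add_zero, zero_add]

lemma star_ab (a : A) (d : B) : T.star (0, 0, a) (0, d, 0) = (a ⊗ₜ[K] d, 0, 0) := by
  simp only [TriOps.star, h.lt8, h.mid8, h.rt8, Prod.mk_add_mk, tmul_add, add_zero, zero_add]

lemma star_aa (a c : A) : T.star (0, 0, a) (0, 0, c) = (0, 0, TA.star a c) := by
  simp only [TriOps.star, h.lt9, h.mid9, h.rt9, Prod.mk_add_mk, tmul_add, add_zero, zero_add]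

end StarLemmas

/-- Extensionality for linear maps out of the iterated augmented tensor product:
it suffices to agree on the seven kinds of generators. -/
lemma ext7_aux {K : Type*} [Field K] {A : Type*} [AddCommGroup A] [Module K A]
    {B : Type*} [AddCommGroup B] [Module K B]
    {C : Type*} [AddCommGroup C] [Module K C]
    {M : Type*} [AddCommMonoid M] [Module K M]
    (f g : ((((A ⊗[K] B) × B × A) ⊗[K] C) × C × ((A ⊗[K] B) × B × A)) →ₗ[K] M)
    (h1 : ∀ (a : A) (b : B) (c : C),
      f ((((a ⊗ₜ[K] b, 0, 0) : (A ⊗[K] B) × B × A)) ⊗ₜ[K] c, 0, 0)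
        = g ((((a ⊗ₜ[K] b, 0, 0) : (A ⊗[K] B) × B × A)) ⊗ₜ[K] c, 0, 0))
    (h2 : ∀ (b : B) (c : C),
      f ((((0, b, 0) : (A ⊗[K] B) × B × A)) ⊗ₜ[K] c, 0, 0)
        = g ((((0, b, 0) : (A ⊗[K] B) × B × A)) ⊗ₜ[K] c, 0, 0))
    (h3 : ∀ (a : A) (c : C),
      f ((((0, 0, a) : (A ⊗[K] B) × B × A)) ⊗ₜ[K] c, 0, 0)
        = g ((((0, 0, a) : (A ⊗[K] B) × B × A)) ⊗ₜ[K] c, 0, 0))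
    (h4 : ∀ c : C, f (0, c, 0) = g (0, c, 0))
    (h5 : ∀ (a : A) (b : B),
      f (0, 0, (a ⊗ₜ[K] b, 0, 0)) = g (0, 0, (a ⊗ₜ[K] b, 0, 0)))
    (h6 : ∀ b : B, f (0, 0, (0, b, 0)) = g (0, 0, (0, b, 0)))
    (h7 : ∀ a : A, f (0, 0, (0, 0, a)) = g (0, 0, (0, 0, a))) : f = g := by
  ext <;>
    simp only [LinearMap.comp_apply, LinearMap.inl_apply, LinearMap.inr_apply,
      AlgebraTensorModule.curry_apply, TensorProduct.curry_apply,
      LinearMap.coe_restrictScalars] <;>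
    first
      | exact h1 _ _ _
      | exact h2 _ _
      | exact h3 _ _
      | exact h4 _
      | exact h5 _ _
      | exact h6 _
      | exact h7 _

set_option maxHeartbeats 2000000

/-- For tridendriform algebras `A`, `B`, `C`, the canonical linear
isomorphism `(A ⊗̄ B) ⊗̄ C ≃ A ⊗̄ (B ⊗̄ C)` (matching the seven components
`A⊗B⊗C, A⊗B, A⊗C, B⊗C, A, B, C` on both sides) intertwines the three tridendriform
operations of the iterated augmented tensor products. Here `A ⊗̄ B` is modelled by
`(A ⊗ B) × B × A`, where `(x, b, a)` represents `x + 1 ⊗ b + a ⊗ 1`. -/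
theorem augTensor_assoc
    {K : Type*} [Field K] {A : Type*} [AddCommGroup A] [Module K A]
    {B : Type*} [AddCommGroup B] [Module K B]
    {C : Type*} [AddCommGroup C] [Module K C]
    (TA : TriOps K A) (TB : TriOps K B) (TC : TriOps K C)
    (hA : TA.IsTridend) (hB : TB.IsTridend) (hC : TC.IsTridend)
    (TAB : TriOps K ((A ⊗[K] B) × B × A)) (hTAB : IsAugTensorTriOps TA TB TAB)
    (TBC : TriOps K ((B ⊗[K] C) × C × B)) (hTBC : IsAugTensorTriOps TB TC TBC)
    (T1 : TriOps K ((((A ⊗[K] B) × B × A) ⊗[K] C) × C × ((A ⊗[K] B) × B × A)))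
    (hT1 : IsAugTensorTriOps TAB TC T1)
    (T2 : TriOps K ((A ⊗[K] ((B ⊗[K] C) × C × B)) × ((B ⊗[K] C) × C × B) × A))
    (hT2 : IsAugTensorTriOps TA TBC T2)
    (e : ((((A ⊗[K] B) × B × A) ⊗[K] C) × C × ((A ⊗[K] B) × B × A)) ≃ₗ[K]
        ((A ⊗[K] ((B ⊗[K] C) × C × B)) × ((B ⊗[K] C) × C × B) × A))
    -- `e` is the canonical isomorphism: it matches the seven components.
    (he1 : ∀ (a : A) (b : B) (c : C),
      e ((((a ⊗ₜ[K] b, 0, 0) : (A ⊗[K] B) × B × A)) ⊗ₜ[K] c, 0, 0)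
        = (a ⊗ₜ[K] (((b ⊗ₜ[K] c, 0, 0) : (B ⊗[K] C) × C × B)), 0, 0))
    (he2 : ∀ (b : B) (c : C),
      e ((((0, b, 0) : (A ⊗[K] B) × B × A)) ⊗ₜ[K] c, 0, 0) = (0, (b ⊗ₜ[K] c, 0, 0), 0))
    (he3 : ∀ (a : A) (c : C),
      e ((((0, 0, a) : (A ⊗[K] B) × B × A)) ⊗ₜ[K] c, 0, 0)
        = (a ⊗ₜ[K] (((0, c, 0) : (B ⊗[K] C) × C × B)), 0, 0))
    (he4 : ∀ c : C, e (0, c, 0) = (0, (0, c, 0), 0))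
    (he5 : ∀ (a : A) (b : B),
      e (0, 0, (a ⊗ₜ[K] b, 0, 0))
        = (a ⊗ₜ[K] (((0, 0, b) : (B ⊗[K] C) × C × B)), 0, 0))
    (he6 : ∀ b : B, e (0, 0, (0, b, 0)) = (0, (0, 0, b), 0))
    (he7 : ∀ a : A, e (0, 0, (0, 0, a)) = (0, 0, a)) :
    ∀ x y, e (T1.lt x y) = T2.lt (e x) (e y) ∧
      e (T1.mid x y) = T2.mid (e x) (e y) ∧
      e (T1.rt x y) = T2.rt (e x) (e y) := by
  have T1_lt1 := hT1.lt1
  have T1_lt2 := hT1.lt2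
  have T1_lt3 := hT1.lt3
  have T1_lt4 := hT1.lt4
  have T1_lt5 := hT1.lt5
  have T1_lt6 := hT1.lt6
  have T1_lt7 := hT1.lt7
  have T1_lt8 := hT1.lt8
  have T1_lt9 := hT1.lt9
  have T1_mid1 := hT1.mid1
  have T1_mid2 := hT1.mid2
  have T1_mid3 := hT1.mid3
  have T1_mid4 := hT1.mid4
  have T1_mid5 := hT1.mid5
  have T1_mid6 := hT1.mid6
  have T1_mid7 := hT1.mid7
  have T1_mid8 := hT1.mid8
  have T1_mid9 := hT1.mid9
  have T1_rt1 := hT1.rt1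
  have T1_rt2 := hT1.rt2
  have T1_rt3 := hT1.rt3
  have T1_rt4 := hT1.rt4
  have T1_rt5 := hT1.rt5
  have T1_rt6 := hT1.rt6
  have T1_rt7 := hT1.rt7
  have T1_rt8 := hT1.rt8
  have T1_rt9 := hT1.rt9
  have T2_lt1 := hT2.lt1
  have T2_lt2 := hT2.lt2
  have T2_lt3 := hT2.lt3
  have T2_lt4 := hT2.lt4
  have T2_lt5 := hT2.lt5
  have T2_lt6 := hT2.lt6
  have T2_lt7 := hT2.lt7
  have T2_lt8 := hT2.lt8
  have T2_lt9 := hT2.lt9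
  have T2_mid1 := hT2.mid1
  have T2_mid2 := hT2.mid2
  have T2_mid3 := hT2.mid3
  have T2_mid4 := hT2.mid4
  have T2_mid5 := hT2.mid5
  have T2_mid6 := hT2.mid6
  have T2_mid7 := hT2.mid7
  have T2_mid8 := hT2.mid8
  have T2_mid9 := hT2.mid9
  have T2_rt1 := hT2.rt1
  have T2_rt2 := hT2.rt2
  have T2_rt3 := hT2.rt3
  have T2_rt4 := hT2.rt4
  have T2_rt5 := hT2.rt5
  have T2_rt6 := hT2.rt6
  have T2_rt7 := hT2.rt7
  have T2_rt8 := hT2.rt8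
  have T2_rt9 := hT2.rt9
  have TAB_lt1 := hTAB.lt1
  have TAB_lt2 := hTAB.lt2
  have TAB_lt3 := hTAB.lt3
  have TAB_lt4 := hTAB.lt4
  have TAB_lt5 := hTAB.lt5
  have TAB_lt6 := hTAB.lt6
  have TAB_lt7 := hTAB.lt7
  have TAB_lt8 := hTAB.lt8
  have TAB_lt9 := hTAB.lt9
  have TAB_mid1 := hTAB.mid1
  have TAB_mid2 := hTAB.mid2
  have TAB_mid3 := hTAB.mid3
  have TAB_mid4 := hTAB.mid4
  have TAB_mid5 := hTAB.mid5
  have TAB_mid6 := hTAB.mid6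
  have TAB_mid7 := hTAB.mid7
  have TAB_mid8 := hTAB.mid8
  have TAB_mid9 := hTAB.mid9
  have TAB_rt1 := hTAB.rt1
  have TAB_rt2 := hTAB.rt2
  have TAB_rt3 := hTAB.rt3
  have TAB_rt4 := hTAB.rt4
  have TAB_rt5 := hTAB.rt5
  have TAB_rt6 := hTAB.rt6
  have TAB_rt7 := hTAB.rt7
  have TAB_rt8 := hTAB.rt8
  have TAB_rt9 := hTAB.rt9
  have TBC_lt1 := hTBC.lt1
  have TBC_lt2 := hTBC.lt2
  have TBC_lt3 := hTBC.lt3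
  have TBC_lt4 := hTBC.lt4
  have TBC_lt5 := hTBC.lt5
  have TBC_lt6 := hTBC.lt6
  have TBC_lt7 := hTBC.lt7
  have TBC_lt8 := hTBC.lt8
  have TBC_lt9 := hTBC.lt9
  have TBC_mid1 := hTBC.mid1
  have TBC_mid2 := hTBC.mid2
  have TBC_mid3 := hTBC.mid3
  have TBC_mid4 := hTBC.mid4
  have TBC_mid5 := hTBC.mid5
  have TBC_mid6 := hTBC.mid6
  have TBC_mid7 := hTBC.mid7
  have TBC_mid8 := hTBC.mid8
  have TBC_mid9 := hTBC.mid9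
  have TBC_rt1 := hTBC.rt1
  have TBC_rt2 := hTBC.rt2
  have TBC_rt3 := hTBC.rt3
  have TBC_rt4 := hTBC.rt4
  have TBC_rt5 := hTBC.rt5
  have TBC_rt6 := hTBC.rt6
  have TBC_rt7 := hTBC.rt7
  have TBC_rt8 := hTBC.rt8
  have TBC_rt9 := hTBC.rt9
  have sAB_tt := star_tt hTAB
  have sBC_tt := star_tt hTBC
  have sAB_tb := star_tb hTAB
  have sBC_tb := star_tb hTBC
  have sAB_ta := star_ta hTAB
  have sBC_ta := star_ta hTBC
  have sAB_bt := star_bt hTAB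
  have sBC_bt := star_bt hTBC
  have sAB_bb := star_bb hTAB
  have sBC_bb := star_bb hTBC
  have sAB_ba := star_ba hTAB
  have sBC_ba := star_ba hTBC
  have sAB_at_ := star_at hTAB
  have sBC_at_ := star_at hTBC
  have sAB_ab := star_ab hTAB
  have sBC_ab := star_ab hTBC
  have sAB_aa := star_aa hTAB
  have sBC_aa := star_aa hTBC
  simp only [Prod.mk_zero_zero] at *
  have hlt : (T1.lt).compr₂ e.toLinearMap
      = ((T2.lt).compl₂ e.toLinearMap).comp e.toLinearMap := by
    apply ext7_aux <;> intros <;>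
      apply ext7_aux <;> intros <;>
      simp only [LinearMap.compr₂_apply, LinearMap.compl₂_apply, LinearMap.comp_apply,
        LinearEquiv.coe_coe,
        T1_lt1,
        T1_lt2,
        T1_lt3,
        T1_lt4,
        T1_lt5,
        T1_lt6,
        T1_lt7,
        T1_lt8,
        T1_lt9,
        T2_lt1,
        T2_lt2,
        T2_lt3,
        T2_lt4,
        T2_lt5,
        T2_lt6,
        T2_lt7,
        T2_lt8,
        T2_lt9,
        TAB_lt1,
        TAB_lt2,
        TAB_lt3,
        TAB_lt4,
        TAB_lt5,
        TAB_lt6,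
        TAB_lt7,
        TAB_lt8,
        TAB_lt9,
        TBC_lt1,
        TBC_lt2,
        TBC_lt3,
        TBC_lt4,
        TBC_lt5,
        TBC_lt6,
        TBC_lt7,
        TBC_lt8,
        TBC_lt9,
        sAB_tt,
        sAB_tb,
        sAB_ta,
        sAB_bt,
        sAB_bb,
        sAB_ba,
        sAB_at_,
        sAB_ab,
        sAB_aa,
        sBC_tt,
        sBC_tb,
        sBC_ta,
        sBC_bt,
        sBC_bb,
        sBC_ba,
        sBC_at_,
        sBC_ab,
        sBC_aa,
        he1,
        he2,
        he3,
        he4,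
        he5,
        he6,
        he7,
        map_zero,
        tmul_zero,
        zero_tmul,
        Prod.mk_zero_zero]
  have hmid : (T1.mid).compr₂ e.toLinearMap
      = ((T2.mid).compl₂ e.toLinearMap).comp e.toLinearMap := by
    apply ext7_aux <;> intros <;>
      apply ext7_aux <;> intros <;>
      simp only [LinearMap.compr₂_apply, LinearMap.compl₂_apply, LinearMap.comp_apply,
        LinearEquiv.coe_coe,
        T1_mid1,
        T1_mid2,
        T1_mid3,
        T1_mid4,
        T1_mid5,
        T1_mid6,
        T1_mid7,
        T1_mid8,
        T1_mid9,
        T2_mid1,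
        T2_mid2,
        T2_mid3,
        T2_mid4,
        T2_mid5,
        T2_mid6,
        T2_mid7,
        T2_mid8,
        T2_mid9,
        TAB_mid1,
        TAB_mid2,
        TAB_mid3,
        TAB_mid4,
        TAB_mid5,
        TAB_mid6,
        TAB_mid7,
        TAB_mid8,
        TAB_mid9,
        TBC_mid1,
        TBC_mid2,
        TBC_mid3,
        TBC_mid4,
        TBC_mid5,
        TBC_mid6,
        TBC_mid7,
        TBC_mid8,
        TBC_mid9,
        sAB_tt,
        sAB_tb,
        sAB_ta,
        sAB_bt,
        sAB_bb,
        sAB_ba,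
        sAB_at_,
        sAB_ab,
        sAB_aa,
        sBC_tt,
        sBC_tb,
        sBC_ta,
        sBC_bt,
        sBC_bb,
        sBC_ba,
        sBC_at_,
        sBC_ab,
        sBC_aa,
        he1,
        he2,
        he3,
        he4,
        he5,
        he6,
        he7,
        map_zero,
        tmul_zero,
        zero_tmul,
        Prod.mk_zero_zero]
  have hrt : (T1.rt).compr₂ e.toLinearMap
      = ((T2.rt).compl₂ e.toLinearMap).comp e.toLinearMap := by
    apply ext7_aux <;> intros <;>
      apply ext7_aux <;> intros <;>
      simp only [LinearMap.compr₂_apply, LinearMap.compl₂_apply, LinearMap.comp_apply,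
        LinearEquiv.coe_coe,
        T1_rt1,
        T1_rt2,
        T1_rt3,
        T1_rt4,
        T1_rt5,
        T1_rt6,
        T1_rt7,
        T1_rt8,
        T1_rt9,
        T2_rt1,
        T2_rt2,
        T2_rt3,
        T2_rt4,
        T2_rt5,
        T2_rt6,
        T2_rt7,
        T2_rt8,
        T2_rt9,
        TAB_rt1,
        TAB_rt2,
        TAB_rt3,
        TAB_rt4,
        TAB_rt5,
        TAB_rt6,
        TAB_rt7,
        TAB_rt8,
        TAB_rt9,
        TBC_rt1,
        TBC_rt2,
        TBC_rt3,
        TBC_rt4,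
        TBC_rt5,
        TBC_rt6,
        TBC_rt7,
        TBC_rt8,
        TBC_rt9,
        sAB_tt,
        sAB_tb,
        sAB_ta,
        sAB_bt,
        sAB_bb,
        sAB_ba,
        sAB_at_,
        sAB_ab,
        sAB_aa,
        sBC_tt,
        sBC_tb,
        sBC_ta,
        sBC_bt,
        sBC_bb,
        sBC_ba,
        sBC_at_,
        sBC_ab,
        sBC_aa,
        he1,
        he2,
        he3,
        he4,
        he5,
        he6,
        he7,
        map_zero,
        tmul_zero,
        zero_tmul,
        Prod.mk_zero_zero]
  intro x y
  refine ⟨?_, ?_, ?_⟩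
  · simpa only [LinearMap.compr₂_apply, LinearMap.compl₂_apply, LinearMap.comp_apply,
      LinearEquiv.coe_coe] using LinearMap.congr_fun (LinearMap.congr_fun hlt x) y
  · simpa only [LinearMap.compr₂_apply, LinearMap.compl₂_apply, LinearMap.comp_apply,
      LinearEquiv.coe_coe] using LinearMap.congr_fun (LinearMap.congr_fun hmid x) y
  · simpa only [LinearMap.compr₂_apply, LinearMap.compl₂_apply, LinearMap.comp_apply,
      LinearEquiv.coe_coe] using LinearMap.congr_fun (LinearMap.congr_fun hrt x) y
end

section
/- Let R ∈ ℚ⟦X⟧ be a formal power series satisfying the functional equation R = X + 3XR + 2XR². Then (X + X² + 2X²·R)·(1 + R)² = R; equivalently, since 1 + R is invertible in ℚ⟦X⟧, the series P := R·(1+R)⁻² equals X + X² + 2X²R, so that P has coefficient 1 in degrees 1 and 2 and coefficient of Xⁿ equal to twice the coefficient of Xⁿ⁻² in R for every n ≥ 3. (This is the generating series identity showing that the dimensions of the codendriform primitives of the free tridendriform bialgebra on one generator are the big Schröder numbers.) -/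
open PowerSeries

/-!
Over any commutative ring,
`(X + X² + 2X²R)(1 + R)² - R = (1 + X + XR)(X + 3XR + 2XR² - R)`,
so the first identity is a polynomial consequence of the functional equation. Since `R` is
divisible by `X`, `1 + R` is a unit and dividing by `(1 + R)²` gives the formula for `R(1 + R)⁻²`,
whose coefficients are read off directly.
-/

section CommRing

variable {A : Type*} [CommRing A] {R : A⟦X⟧}

theorem constantCoeff_eq_zero_of_eq_schroder (hR : R = X + 3 * X * R + 2 * X * R ^ 2) :
    constantCoeff R = 0 :=
  X_dvd_iff.mp ⟨1 + 3 * R + 2 * R ^ 2, by linear_combination hR⟩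

theorem mul_one_add_sq_eq_of_eq_schroder (hR : R = X + 3 * X * R + 2 * X * R ^ 2) :
    (X + X ^ 2 + 2 * X ^ 2 * R) * (1 + R) ^ 2 = R := by
  linear_combination (-(X * R) - 1 - X) * hR

end CommRing

theorem PowerSeries.eq_mul_inv_sq_iff_mul_sq_eq {k : Type*} [Field k] {φ ψ u : k⟦X⟧}
    (hu : constantCoeff u ≠ 0) : φ = ψ * (u⁻¹) ^ 2 ↔ φ * u ^ 2 = ψ := by
  rw [sq, sq, ← PowerSeries.mul_inv_rev, eq_mul_inv_iff_mul_eq (by simpa using hu)]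

theorem coeff_X_add_X_sq_add_two_X_sq_mul {A : Type*} [CommSemiring A] (R : A⟦X⟧) (n : ℕ) :
    coeff n (X + X ^ 2 + 2 * X ^ 2 * R) =
      (if n = 1 then 1 else 0) + (if n = 2 then 1 else 0) +
        if 2 ≤ n then 2 * coeff (n - 2) R else 0 := by
  rw [mul_comm 2, mul_assoc, ← map_ofNat C, mul_comm (C _), map_add, map_add, coeff_X, coeff_X_pow,
    coeff_X_pow_mul', coeff_mul_C, mul_comm (coeff _ R)]

/-- If `R ∈ ℚ⟦X⟧` satisfies `R = X + 3XR + 2XR²`, then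
`(X + X² + 2X²R)(1 + R)² = R`; equivalently `P := R(1 + R)⁻²` equals `X + X² + 2X²R`,
so `P` has coefficient `1` in degrees `1` and `2`, and for `n ≥ 3` its coefficient of
`Xⁿ` is twice the coefficient of `Xⁿ⁻²` in `R`. -/
theorem codendriform_primitives_series
    (R : PowerSeries ℚ) (hR : R = X + 3 * X * R + 2 * X * R ^ 2) :
    (X + X ^ 2 + 2 * X ^ 2 * R) * (1 + R) ^ 2 = R ∧
    R * ((1 + R)⁻¹) ^ 2 = X + X ^ 2 + 2 * X ^ 2 * R ∧
    coeff 1 (R * ((1 + R)⁻¹) ^ 2) = 1 ∧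
    coeff 2 (R * ((1 + R)⁻¹) ^ 2) = 1 ∧
    (∀ n : ℕ, 3 ≤ n →
      coeff n (R * ((1 + R)⁻¹) ^ 2) = 2 * coeff (n - 2) R) := by
  have hR0 := constantCoeff_eq_zero_of_eq_schroder hR
  have hP := mul_one_add_sq_eq_of_eq_schroder hR
  have hPR : R * ((1 + R)⁻¹) ^ 2 = X + X ^ 2 + 2 * X ^ 2 * R :=
    ((eq_mul_inv_sq_iff_mul_sq_eq (by simp [hR0])).mpr hP).symm
  refine ⟨hP, hPR, ?_, ?_, fun n hn => ?_⟩ <;> rw [hPR, coeff_X_add_X_sq_add_two_X_sq_mul]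
  · simp
  · simp [hR0]
  · rw [if_neg (by omega), if_neg (by omega), if_pos (by omega), zero_add, zero_add]
end

section
/- Let A be a tridendriform algebra over a field K, and let β, γ ∈ K. Suppose the operations of A are extended to the unitalization K1⊕A by setting, for all a ∈ A: a≺1 = βa, a≻1 = (1−β)a, 1≺a = γa, 1≻a = (1−γ)a, 1·a = a·1 = 0, and 1*x = x = x*1 where * = ≺+·+≻. Assume that for all a, c ∈ A the relations (a≺1)≺c = a≺(1*c) and (a*1)≻c = a≻(1≻c) hold. Then: if the operation ≺ is not identically zero on A (i.e. a≺c ≠ 0 for some a,c ∈ A), then β = 1; and if the operation ≻ is not identically zero on A, then γ = 0. In particular the unit conventions a≺1 = a, a≻1 = 0, 1≺a = 0, 1≻a = a are the only ones compatible with the tridendriform relations. -/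
open TensorProduct

/-- Suppose the operations of a tridendriform algebra `A` are extended to
the unitalization `K1 ⊕ A` by `a ≺ 1 = β a`, `a ≻ 1 = (1 − β) a`, `1 ≺ a = γ a`,
`1 ≻ a = (1 − γ) a`, `1 · a = a · 1 = 0` (and `1 * x = x = x * 1` with `* = ≺ + · + ≻`),
and that the relations `(a ≺ 1) ≺ c = a ≺ (1 * c)` and `(a * 1) ≻ c = a ≻ (1 ≻ c)` hold
for all `a, c ∈ A`.  Then `≺ ≢ 0` forces `β = 1` and `≻ ≢ 0` forces `γ = 0`; in
particular the unit conventions `a ≺ 1 = a`, `a ≻ 1 = 0`, `1 ≺ a = 0`, `1 ≻ a = a` are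
the only possible ones. -/
theorem unit_conventions_unique
    {K : Type*} [Field K] {A : Type*} [AddCommGroup A] [Module K A]
    (T : TriOps K A) (hT : T.IsTridend) (β γ : K)
    -- `(a ≺ 1) ≺ c = a ≺ (1 * c)`, where `a ≺ 1 = β a` and
    -- `1 * c = 1 ≺ c + 1 · c + 1 ≻ c = γ c + 0 + (1 − γ) c`:
    (h1 : ∀ a c : A, T.lt (β • a) c = T.lt a (γ • c + 0 + (1 - γ) • c))
    -- `(a * 1) ≻ c = a ≻ (1 ≻ c)`, where `a * 1 = β a + 0 + (1 − β) a` and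
    -- `1 ≻ c = (1 − γ) c`:
    (h2 : ∀ a c : A, T.rt (β • a + 0 + (1 - β) • a) c = T.rt a ((1 - γ) • c)) :
    ((∃ a c : A, T.lt a c ≠ 0) → β = 1) ∧ ((∃ a c : A, T.rt a c ≠ 0) → γ = 0) := by
  constructor
  · rintro ⟨a, c, h⟩
    have := h1 a c
    rw [add_zero, ← add_smul] at this
    simp only [map_smul, LinearMap.smul_apply] at this
    have h3 : (β - 1) • T.lt a c = 0 := by
      rw [sub_smul, one_smul, this]
      rw [show γ + (1 - γ) = 1 by ring, one_smul, sub_self]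
    by_contra hb
    exact h (by simpa [sub_eq_zero, hb] using smul_eq_zero.mp h3)
  · rintro ⟨a, c, h⟩
    have := h2 a c
    rw [add_zero, ← add_smul, show β + (1 - β) = 1 by ring, one_smul] at this
    simp only [map_smul, LinearMap.smul_apply] at this
    have h3 : γ • T.rt a c = 0 := by
      have : (1 : K) • T.rt a c = (1 - γ) • T.rt a c := by
        rw [one_smul]; exact this
      have := sub_eq_zero.mpr this
      rwa [← sub_smul, show (1 : K) - (1 - γ) = γ by ring] at this
    by_contra hg
    exact h (by simpa [hg] using smul_eq_zero.mp h3)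
end
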